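/- arXiv:1503.08434 — 2 statements merged into one kernel-verified Lean document; each statement's English description precedes it below -/
import Mathlib

section
/- For λ > 0, R_c > 0, α ≥ 2, and a > 0: 2πλ ∫₀^{R_c} r·exp(−λπ r²) / (1 + a·r^α) dr = Σ_{k=0}^∞ (−1)ᵏ (λπ R_c²)^{k+1} / Γ(k+2) · ₂F₁(1, 2(k+1)/α; 2(k+1)/α + 1; −a·R_c^α). -/
open Real Set intervalIntegral

/-- The Gauss hypergeometric function `₂F₁(a, b; c; x)` defined by its Euler integral
representation (valid for `c > b > 0` and `x < 1`). -/
noncomputable def hyp2F1 (a b c x : ℝ) : ℝ :=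
  (Real.Gamma c / (Real.Gamma b * Real.Gamma (c - b))) *
    ∫ t in (0:ℝ)..1, t ^ (b - 1) * (1 - t) ^ (c - b - 1) * (1 - x * t) ^ (-a)

/-! Expanding `exp (-λπ r²) = ∑ₖ (-λπ)ᵏ r²ᵏ / k!` and integrating termwise (on `[0, R_c]` the
`k`-th term is bounded by `(|λπ| R_c²)ᵏ / k!` times a constant) reduces the claim to the moments
`∫₀^{R_c} r^{2k+1} / (1 + a rᵅ) dr`. The substitution `t = (r / R_c)ᵅ` turns each moment into the
Euler integral of `₂F₁(1, b; b + 1; -a R_cᵅ)` with `b = 2(k+1)/α`, whose Gamma prefactor is just `b`.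
-/

open Nat

theorem hyp2F1_one_self_add_one {b : ℝ} (hb : 0 < b) (x : ℝ) :
    hyp2F1 1 b (b + 1) x = b * ∫ t in (0:ℝ)..1, t ^ (b - 1) * (1 - x * t)⁻¹ := by
  have hΓ : Gamma b ≠ 0 := (Gamma_pos_of_pos hb).ne'
  simp only [hyp2F1, add_sub_cancel_left, sub_self, rpow_zero, mul_one, rpow_neg_one,
    Gamma_one, Gamma_add_one hb.ne']
  field_simp

theorem integral_rpow_mul_eq_integral_comp_div_rpow {α R : ℝ} (hα : 0 < α) (hR : 0 < R)
    (p : ℝ) (h : ℝ → ℝ) :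
    ∫ t in (0:ℝ)..1, t ^ (p / α - 1) * h t
      = α / R ^ p * ∫ r in (0:ℝ)..R, r ^ (p - 1) * h ((r / R) ^ α) := by
  have hsubst := integral_deriv_smul_comp_of_deriv_nonneg
    (f := fun r => (r / R) ^ α) (f' := fun r => α * (r / R) ^ (α - 1) / R)
    (g := fun t => t ^ (p / α - 1) * h t) (a := 0) (b := R)
    ((continuous_id.div_const R).rpow_const fun _ => Or.inr hα.le).continuousOn
    (fun r hr => ?deriv) (fun r hr => ?nonneg)
  case deriv =>
    have hu : 0 < r / R := div_pos (by simpa [hR.le] using hr.1) hR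
    have hd := (hasDerivAt_rpow_const (p := α) (Or.inl hu.ne')).comp r
      ((hasDerivAt_id' r).div_const R)
    rwa [mul_one_div] at hd
  case nonneg =>
    have hu : 0 < r / R := div_pos (by simpa [hR.le] using hr.1) hR
    positivity
  simp only [zero_div, zero_rpow hα.ne', div_self hR.ne', one_rpow] at hsubst
  rw [← hsubst, ← integral_const_mul]
  refine integral_congr_uIoo fun r hr => ?_
  rw [uIoo_of_le hR.le] at hr
  have hu : 0 < r / R := div_pos hr.1 hR
  have hpow : (r / R) ^ (α - 1) * ((r / R) ^ α) ^ (p / α - 1) = r ^ (p - 1) / R ^ (p - 1) := by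
    rw [← rpow_mul hu.le, ← rpow_add hu, div_rpow hr.1.le hR.le]
    congr 2 <;> field_simp <;> ring
  have hRp : R ^ p = R ^ (p - 1) * R := by
    rw [rpow_sub_one hR.ne']; field_simp
  calc (α * (r / R) ^ (α - 1) / R) • (((r / R) ^ α) ^ (p / α - 1) * h ((r / R) ^ α))
      = α / R * ((r / R) ^ (α - 1) * ((r / R) ^ α) ^ (p / α - 1)) * h ((r / R) ^ α) := by
        rw [smul_eq_mul]; ring
    _ = α / R ^ p * (r ^ (p - 1) * h ((r / R) ^ α)) := by
        rw [hpow, hRp]; field_simp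

theorem hyp2F1_one_eq_integral_rpow_div_one_add_rpow {α R : ℝ} (hα : 0 < α) (hR : 0 < R) {p : ℝ}
    (hp : 0 < p) (a : ℝ) :
    hyp2F1 1 (p / α) (p / α + 1) (-(a * R ^ α))
      = p / R ^ p * ∫ r in (0:ℝ)..R, r ^ (p - 1) / (1 + a * r ^ α) := by
  rw [hyp2F1_one_self_add_one (div_pos hp hα),
    integral_rpow_mul_eq_integral_comp_div_rpow hα hR p, ← mul_assoc]
  congr 1
  · field_simp
  · refine integral_congr fun r hr => ?_
    rw [uIcc_of_le hR.le] at hr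
    rw [neg_mul, sub_neg_eq_add, div_rpow hr.1 hR.le, ← div_eq_mul_inv]
    field_simp [(rpow_pos_of_pos hR α).ne']

theorem hasSum_integral_mul_exp_neg_mul_sq {g : ℝ → ℝ} {R : ℝ} (hR : 0 ≤ R)
    (hg : ContinuousOn g (Icc 0 R)) (M : ℝ) :
    HasSum (fun k : ℕ => (-M) ^ k / k ! * ∫ r in (0:ℝ)..R, r ^ (2 * k + 1) * g r)
      (∫ r in (0:ℝ)..R, r * exp (-(M * r ^ 2)) * g r) := by
  obtain ⟨C, hC⟩ := isCompact_Icc.exists_bound_of_continuousOn hg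
  have hIoc : uIoc 0 R ⊆ Icc 0 R := by rw [uIoc_of_le hR]; exact Ioc_subset_Icc_self
  simp_rw [← integral_const_mul]
  refine hasSum_integral_of_dominated_convergence (fun k _ => |M| ^ k / k ! * R ^ (2 * k + 1) * C)
    (fun k => ?meas) (fun k => .of_forall fun r hr => ?bound) (.of_forall fun _ _ => ?summable)
    intervalIntegrable_const (.of_forall fun r _ => ?lim)
  case meas =>
    exact ((continuousOn_const.mul ((continuousOn_pow _).mul hg)).mono hIoc).aestronglyMeasurable
      measurableSet_uIoc
  case bound =>
    obtain ⟨hr0, hrR⟩ := hIoc hr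
    rw [norm_mul, norm_mul, norm_div, norm_pow, norm_neg, norm_pow, Real.norm_of_nonneg hr0,
      Real.norm_natCast, Real.norm_eq_abs, ← mul_assoc]
    gcongr
    exact hC r ⟨hr0, hrR⟩
  case summable =>
    refine ((summable_pow_div_factorial (|M| * R ^ 2)).mul_right (R * C)).congr fun k => ?_
    ring
  case lim =>
    have hexp := (NormedSpace.expSeries_div_hasSum_exp (-(M * r ^ 2))).mul_right (r * g r)
    rw [← exp_eq_exp_ℝ] at hexp
    rw [show r * exp (-(M * r ^ 2)) * g r = exp (-(M * r ^ 2)) * (r * g r) by ring]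
    exact hexp.congr_fun fun k => by ring

theorem stmt7_general (lam Rc α a : ℝ) (hRc : 0 < Rc) (hα : 2 ≤ α) (ha : 0 < a) :
    2 * π * lam * ∫ r in (0:ℝ)..Rc, r * Real.exp (-(lam * π * r ^ 2)) / (1 + a * r ^ α)
      = ∑' k : ℕ, (-1 : ℝ) ^ k * (lam * π * Rc ^ 2) ^ (k + 1) / Real.Gamma ((k : ℝ) + 2) *
          hyp2F1 1 (2 * ((k : ℝ) + 1) / α) (2 * ((k : ℝ) + 1) / α + 1) (-(a * Rc ^ α)) := by
  have hα0 : 0 < α := by linarith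
  have hg : ContinuousOn (fun r => (1 + a * r ^ α)⁻¹) (Icc 0 Rc) :=
    ContinuousOn.inv₀ (continuous_const.add (continuous_const.mul
      (continuous_id.rpow_const fun _ => Or.inr hα0.le))).continuousOn
      fun r hr => (by have := rpow_nonneg hr.1 α; positivity : 0 < 1 + a * r ^ α).ne'
  have hseries := (hasSum_integral_mul_exp_neg_mul_sq hRc.le hg (lam * π)).tsum_eq
  simp only [← div_eq_mul_inv] at hseries
  rw [← hseries, ← tsum_mul_left]
  refine tsum_congr fun k => ?_
  have hp : (0:ℝ) < 2 * (k + 1) := by positivity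
  have hexp : 2 * ((k:ℝ) + 1) - 1 = ((2 * k + 1 : ℕ) : ℝ) := by push_cast; ring
  have hΓ : Gamma ((k:ℝ) + 2) = (k + 1) * k ! := by
    rw [show (k:ℝ) + 2 = ((k + 1 : ℕ) : ℝ) + 1 by push_cast; ring, Gamma_nat_eq_factorial,
      factorial_succ]
    push_cast; ring
  have hRc_pow : Rc ^ (2 * ((k:ℝ) + 1)) = Rc ^ (2 * k + 2) := by
    rw [← rpow_natCast]; push_cast; ring_nf
  rw [hyp2F1_one_eq_integral_rpow_div_one_add_rpow hα0 hRc hp a, hexp, hΓ, hRc_pow]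
  simp only [rpow_natCast]
  field_simp
  ring

/-- Proposition 3: for `λ, R_c, a > 0` and `α ≥ 2`,
`2πλ ∫₀^{R_c} r e^{−λπr²}/(1 + a rᵅ) dr
  = Σ_k (−1)ᵏ (λπR_c²)^{k+1}/Γ(k+2) · ₂F₁(1, 2(k+1)/α; 2(k+1)/α + 1; −a R_cᵅ)`. -/
theorem stmt7 (lam Rc α a : ℝ) (hlam : 0 < lam) (hRc : 0 < Rc) (hα : 2 ≤ α) (ha : 0 < a) :
    2 * π * lam * ∫ r in (0:ℝ)..Rc, r * Real.exp (-(lam * π * r ^ 2)) / (1 + a * r ^ α)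
      = ∑' k : ℕ, (-1 : ℝ) ^ k * (lam * π * Rc ^ 2) ^ (k + 1) / Real.Gamma ((k : ℝ) + 2) *
          hyp2F1 1 (2 * ((k : ℝ) + 1) / α) (2 * ((k : ℝ) + 1) / α + 1) (-(a * Rc ^ α)) :=
  stmt7_general lam Rc α a hRc hα ha
end

section
/- If U ~ Exp(λπ) and h ~ Exp(1) are independent, then for b > 0 and z > 0: P( b·h / U² ≥ z ) = ∫₀^∞ λπ·e^{−λπu}·e^{−(z/b)u²} du = √(ψ/(2z)) · e^{ψ/(8z)} · D_{−1}(√(ψ/(2z))), where ψ = b·(λπ)² and D_{−1} is the parabolic cylinder function. -/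
open MeasureTheory ProbabilityTheory Real Set

set_option autoImplicit false

/-- The complementary error function `erfc x = (2/√π) ∫_x^∞ e^{−t²} dt`. -/
noncomputable def erfc (x : ℝ) : ℝ := (2 / Real.sqrt π) * ∫ t in Set.Ioi x, Real.exp (-t ^ 2)

/-- The parabolic cylinder function of order −1:
`D_{−1}(x) = e^{x²/4} √(π/2) erfc(x/√2)`. -/
noncomputable def Dm1 (x : ℝ) : ℝ :=
  Real.exp (x ^ 2 / 4) * Real.sqrt (π / 2) * erfc (x / Real.sqrt 2)

/-!
By independence, conditionally on `U = u` the event `b h / U² ≥ z` is the tail event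
`h ≥ (z / b) u²`, of probability `e^{-(z/b) u²}`; integrating this against the `Exp(λπ)` law of
`U` gives the integral.
With `a = λπ` and `c = z / b`, completing the square `a u + c u² = (√c u + a / (2√c))² - a² / (4c)`
turns the integral into a Gaussian tail `∫_{a/(2√c)}^∞ e^{-t²} dt`, that is, an `erfc` value,
and `D_{-1}` is by definition a rescaled `erfc`.
-/

instance nullSingletonClass_expMeasure (r : ℝ) : NullSingletonClass (expMeasure r) :=
  nullSingletonClass_withDensity _

theorem expMeasure_Ici {r t : ℝ} (hr : 0 < r) (ht : 0 ≤ t) :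
    expMeasure r (Ici t) = ENNReal.ofReal (exp (-(r * t))) := by
  have := isProbabilityMeasure_expMeasure hr
  rw [← compl_Iio, prob_compl_eq_one_sub measurableSet_Iio, measure_congr Iio_ae_eq_Iic,
    ← ofReal_cdf, cdf_expMeasure_eq hr, if_pos ht, ← ENNReal.ofReal_one,
    ← ENNReal.ofReal_sub _ (by simpa using mul_nonneg hr.le ht), sub_sub_cancel]

theorem lintegral_expMeasure {r : ℝ} {f : ℝ → ENNReal} (hf : Measurable f) :
    ∫⁻ x, f x ∂expMeasure r = ∫⁻ x in Ioi 0, ENNReal.ofReal (r * exp (-(r * x))) * f x := by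
  rw [expMeasure, gammaMeasure, lintegral_withDensity_eq_lintegral_mul _ (f := gammaPDF 1 r)
    (measurable_gammaPDFReal 1 r).ennreal_ofReal hf, ← lintegral_add_compl _ measurableSet_Ici,
    compl_Ici, setLIntegral_congr_fun measurableSet_Iio fun x hx => by
      rw [Pi.mul_apply, gammaPDF_of_neg hx, zero_mul], lintegral_zero, add_zero,
    setLIntegral_congr Ioi_ae_eq_Ici.symm]
  refine setLIntegral_congr_fun measurableSet_Ioi fun x hx => ?_
  rw [Pi.mul_apply, gammaPDF_of_nonneg (le_of_lt hx)]
  simp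

theorem measure_Ici_eq_one_of_nonpos {ν : Measure ℝ} [IsProbabilityMeasure ν]
    (h₀ : ν (Ici 0) = 1) {t : ℝ} (ht : t ≤ 0) : ν (Ici t) = 1 :=
  le_antisymm prob_le_one (h₀ ▸ measure_mono (Ici_subset_Ici.mpr ht))

theorem eq_expMeasure_of_measure_Ici {ν : Measure ℝ} [IsProbabilityMeasure ν] {r : ℝ} (hr : 0 < r)
    (h : ∀ t, 0 ≤ t → ν (Ici t) = ENNReal.ofReal (exp (-(r * t)))) : ν = expMeasure r := by
  have := isProbabilityMeasure_expMeasure hr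
  refine Measure.ext_of_Ici _ _ fun t => ?_
  rcases le_total 0 t with ht | ht
  · rw [h t ht, expMeasure_Ici hr ht]
  · have hν : ν (Ici 0) = 1 := by simpa using h 0 le_rfl
    have hexp : expMeasure r (Ici 0) = 1 := by simpa using expMeasure_Ici hr le_rfl
    rw [measure_Ici_eq_one_of_nonpos hν ht, measure_Ici_eq_one_of_nonpos hexp ht]

theorem map_eq_expMeasure {Ω : Type*} [MeasurableSpace Ω] {μ : Measure Ω} [IsProbabilityMeasure μ]
    {X : Ω → ℝ} (hX : Measurable X) {r : ℝ} (hr : 0 < r)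
    (h : ∀ t, 0 ≤ t → (μ {ω | t ≤ X ω}).toReal = exp (-(r * t))) : μ.map X = expMeasure r := by
  have := Measure.isProbabilityMeasure_map (μ := μ) hX.aemeasurable
  refine eq_expMeasure_of_measure_Ici hr fun t ht => ?_
  rw [Measure.map_apply hX measurableSet_Ici, ← h t ht, ENNReal.ofReal_toReal (measure_ne_top _ _)]
  rfl

theorem ProbabilityTheory.IndepFun.measure_mem_eq_lintegral {Ω α β : Type*} [MeasurableSpace Ω]
    [MeasurableSpace α] [MeasurableSpace β] {μ : Measure Ω} [IsFiniteMeasure μ] {X : Ω → α}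
    {Y : Ω → β} (hX : Measurable X) (hY : Measurable Y) (hXY : IndepFun X Y μ) {S : Set (α × β)}
    (hS : MeasurableSet S) :
    μ {ω | (X ω, Y ω) ∈ S} = ∫⁻ x, μ.map Y (Prod.mk x ⁻¹' S) ∂μ.map X := by
  rw [← Measure.prod_apply hS, ← (indepFun_iff_map_prod_eq_prod_map_map hX.aemeasurable
    hY.aemeasurable).mp hXY, Measure.map_apply (hX.prodMk hY) hS]
  rfl

theorem toReal_measure_le_mul_div_sq_eq_integral {Ω : Type*} [MeasurableSpace Ω] {μ : Measure Ω}
    [IsProbabilityMeasure μ] {X Y : Ω → ℝ} (hX : Measurable X) (hY : Measurable Y)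
    (hXY : IndepFun X Y μ) {r b z : ℝ} (hr : 0 ≤ r) (hb : 0 < b) (hz : 0 ≤ z)
    (hXlaw : μ.map X = expMeasure r) (hYlaw : μ.map Y = expMeasure 1) :
    (μ {ω | z ≤ b * Y ω / X ω ^ 2}).toReal
      = ∫ u in Ioi 0, r * exp (-(r * u)) * exp (-(z / b) * u ^ 2) := by
  set S : Set (ℝ × ℝ) := {p | z ≤ b * p.2 / p.1 ^ 2}
  have hS : MeasurableSet S := measurableSet_le measurable_const (by fun_prop)
  have hslice : ∀ u : ℝ, u ≠ 0 →
      expMeasure 1 (Prod.mk u ⁻¹' S) = ENNReal.ofReal (exp (-(z / b) * u ^ 2)) := by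
    intro u hu
    have hslice_eq : Prod.mk u ⁻¹' S = Ici (z * u ^ 2 / b) := by
      ext v
      simp only [S, mem_preimage, mem_ofPred_eq, mem_Ici]
      rw [le_div_iff₀ (by positivity), div_le_iff₀ hb, mul_comm v]
    rw [hslice_eq, expMeasure_Ici one_pos (by positivity)]
    congr 2
    ring
  have hg : Continuous fun u : ℝ => r * exp (-(r * u)) * exp (-(z / b) * u ^ 2) := by fun_prop
  calc (μ {ω | z ≤ b * Y ω / X ω ^ 2}).toReal
      = (∫⁻ u, expMeasure 1 (Prod.mk u ⁻¹' S) ∂expMeasure r).toReal := by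
        rw [← hXlaw, ← hYlaw, ← hXY.measure_mem_eq_lintegral hX hY hS]
        rfl
    -- `hslice` fails only at `u = 0`, where `b * v / 0 ^ 2 = 0`; that point is null.
    _ = (∫⁻ u, ENNReal.ofReal (exp (-(z / b) * u ^ 2)) ∂expMeasure r).toReal := by
        rw [lintegral_congr_ae ((Measure.ae_ne _ 0).mono hslice)]
    _ = (∫⁻ u in Ioi 0, ENNReal.ofReal (r * exp (-(r * u)) * exp (-(z / b) * u ^ 2))).toReal := by
        rw [lintegral_expMeasure (by fun_prop)]
        simp_rw [ENNReal.ofReal_mul' (exp_pos _).le]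
    _ = ∫ u in Ioi 0, r * exp (-(r * u)) * exp (-(z / b) * u ^ 2) :=
        (integral_eq_lintegral_of_nonneg_ae (.of_forall fun u => by positivity)
          hg.aestronglyMeasurable).symm

theorem integral_Ioi_comp_add_right {E : Type*} [NormedAddCommGroup E] [NormedSpace ℝ E]
    (g : ℝ → E) (a d : ℝ) : ∫ x in Ioi a, g (x + d) = ∫ x in Ioi (a + d), g x := by
  have := (measurePreserving_add_right volume d).setIntegral_preimage_emb
    (measurableEmbedding_addRight d) g (Ioi (a + d))
  rwa [preimage_add_const_Ioi, add_sub_cancel_right] at this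

theorem integral_Ioi_exp_neg_sq_eq_erfc (x : ℝ) :
    ∫ t in Ioi x, exp (-t ^ 2) = √π / 2 * erfc x := by
  have : √π ≠ 0 := (sqrt_pos.mpr pi_pos).ne'
  rw [erfc]
  field_simp

theorem integral_Ioi_exp_neg_mul_mul_exp_neg_mul_sq (a : ℝ) {c : ℝ} (hc : 0 < c) :
    ∫ u in Ioi (0 : ℝ), exp (-(a * u)) * exp (-c * u ^ 2)
      = exp (a ^ 2 / (4 * c)) / √c * ∫ t in Ioi (a / (2 * √c)), exp (-t ^ 2) := by
  have hsc : 0 < √c := sqrt_pos.mpr hc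
  have hsq : √c ^ 2 = c := sq_sqrt hc.le
  have complete_square : ∀ u : ℝ, exp (-(a * u)) * exp (-c * u ^ 2)
      = exp (a ^ 2 / (4 * c)) * exp (-(√c * (u + a / (2 * c))) ^ 2) := by
    intro u
    rw [← exp_add, ← exp_add, mul_pow, hsq]
    congr 1
    field_simp
    ring
  simp_rw [complete_square]
  rw [integral_const_mul, div_mul_eq_mul_div, mul_div_assoc,
    integral_Ioi_comp_add_right (fun v => exp (-(√c * v) ^ 2)), zero_add,
    integral_comp_mul_left_Ioi (fun t => exp (-t ^ 2)) _ hsc, smul_eq_mul, inv_mul_eq_div,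
    show √c * (a / (2 * c)) = a / (2 * √c) by rw [← hsq, sqrt_sq hsc.le]; field_simp]

theorem integral_Ioi_mul_exp_neg_mul_mul_exp_neg_mul_sq_eq_Dm1 {a c : ℝ} (ha : 0 ≤ a)
    (hc : 0 < c) :
    ∫ u in Ioi (0 : ℝ), a * exp (-(a * u)) * exp (-c * u ^ 2)
      = √(a ^ 2 / (2 * c)) * exp (a ^ 2 / (8 * c)) * Dm1 (√(a ^ 2 / (2 * c))) := by
  have hsc : 0 < √c := sqrt_pos.mpr hc
  have hs2 : √2 ^ 2 = 2 := sq_sqrt zero_le_two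
  have hx : √(a ^ 2 / (2 * c)) = a / (√2 * √c) := by
    rw [sqrt_div (sq_nonneg a), sqrt_sq ha, sqrt_mul zero_le_two]
  have hxsq : √(a ^ 2 / (2 * c)) ^ 2 = a ^ 2 / (2 * c) := sq_sqrt (by positivity)
  have hexp : exp (a ^ 2 / (8 * c)) * exp (a ^ 2 / (2 * c) / 4) = exp (a ^ 2 / (4 * c)) := by
    rw [← exp_add]
    congr 1
    field_simp
    ring
  simp_rw [mul_assoc a]
  rw [integral_const_mul, integral_Ioi_exp_neg_mul_mul_exp_neg_mul_sq a hc,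
    integral_Ioi_exp_neg_sq_eq_erfc, Dm1, hxsq, ← hexp, sqrt_div pi_pos.le,
    show √(a ^ 2 / (2 * c)) / √2 = a / (2 * √c) by rw [hx]; field_simp; rw [hs2], hx]
  field_simp
  rw [hs2]
  ring

/-- Asymptotic downlink SNR cdf complement for `α = 4` (equation (28)): if `U ~ Exp(λπ)`
and `h ~ Exp(1)` are independent, then for `b, z > 0` and `ψ = b(λπ)²`,
`P(b·h/U² ≥ z) = ∫₀^∞ λπ e^{−λπu} e^{−(z/b)u²} du = √(ψ/(2z)) e^{ψ/(8z)} D_{−1}(√(ψ/(2z)))`. -/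
theorem stmt12 {Ω : Type*} [MeasurableSpace Ω] (μ : Measure Ω) [IsProbabilityMeasure μ]
    (lam b z ψ : ℝ) (hlam : 0 < lam) (hb : 0 < b) (hz : 0 < z)
    (hψ : ψ = b * (lam * π) ^ 2)
    (U h : Ω → ℝ) (hUm : Measurable U) (hhm : Measurable h)
    (hU : ∀ t : ℝ, 0 ≤ t → (μ {ω | t ≤ U ω}).toReal = Real.exp (-(lam * π * t)))
    (hh : ∀ t : ℝ, 0 ≤ t → (μ {ω | t ≤ h ω}).toReal = Real.exp (-t))
    (hind : IndepFun U h μ) :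
    (μ {ω | z ≤ b * h ω / (U ω) ^ 2}).toReal
        = ∫ u in Set.Ioi (0:ℝ), lam * π * Real.exp (-(lam * π * u)) * Real.exp (-(z / b) * u ^ 2)
    ∧ (∫ u in Set.Ioi (0:ℝ), lam * π * Real.exp (-(lam * π * u)) * Real.exp (-(z / b) * u ^ 2))
        = Real.sqrt (ψ / (2 * z)) * Real.exp (ψ / (8 * z)) * Dm1 (Real.sqrt (ψ / (2 * z))) := by
  have ha : 0 < lam * π := mul_pos hlam pi_pos
  have hUlaw := map_eq_expMeasure hUm ha hU
  have hhlaw := map_eq_expMeasure hhm one_pos fun t ht => by rw [one_mul]; exact hh t ht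
  have hψ₂ : ψ / (2 * z) = (lam * π) ^ 2 / (2 * (z / b)) := by rw [hψ]; field_simp
  have hψ₈ : ψ / (8 * z) = (lam * π) ^ 2 / (8 * (z / b)) := by rw [hψ]; field_simp
  refine ⟨toReal_measure_le_mul_div_sq_eq_integral hUm hhm hind ha.le hb hz.le hUlaw hhlaw, ?_⟩
  rw [hψ₂, hψ₈]
  exact integral_Ioi_mul_exp_neg_mul_mul_exp_neg_mul_sq_eq_Dm1 ha.le (div_pos hz hb)
end
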